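/- Let F be a field, V an F-vector space, and Γ₃ = V × T²V × T³V the group with operation (v₁, v₂, v₃)(v₁', v₂', v₃') = (v₁ + v₁', v₂ + v₂' + [v₁, v₁'], v₃ + v₃' + 3[v₁, v₂'] + 3[v₂, v₁'] + [v₁, v₁', v₁' − v₁]). Then for all g = (v₁, v₂, v₃), g' = (v₁', v₂', v₃'), g'' = (v₁'', v₂'', v₃'') in Γ₃, the left-normed group commutator satisfies [g, g', g''] = (0, 0, 12 [v₁, v₁', v₁'']), where on the right the bracket is the left-normed tensor-algebra bracket [x, y, z] = [[x, y], z] with [x, y] = x ⊗ y − y ⊗ x. -/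

import Mathlib

/-!
STATEMENT 6: In the group `Γ₃ = V × T²V × T³V`, the left-normed group commutator
`[g, g', g''] = [[g, g'], g'']` (with `[g, g'] = g⁻¹g'⁻¹gg'`) satisfies
`[g, g', g''] = (0, 0, 12 [v₁, v₁', v₁''])`, where on the right the bracket is
the left-normed tensor-algebra bracket.
-/
open TensorProduct

section LieTuples

variable (F : Type*) {V : Type*} [Field F] [AddCommGroup V] [Module F V]

/-- `[u, w] = u ⊗ w − w ⊗ u ∈ T²V` for `u, w ∈ V`. -/
noncomputable def br11 (u w : V) : V ⊗[F] V :=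
  u ⊗ₜ[F] w - w ⊗ₜ[F] u

/-- `[x, y] = x ⊗ y − y ⊗ x ∈ T³V` for `x ∈ T²V`, `y ∈ V`, where the tensor
`y ⊗ x ∈ V ⊗ T²V` is rewritten in `T³V = (V ⊗ V) ⊗ V` via the associator. -/
noncomputable def br21 (x : V ⊗[F] V) (y : V) : (V ⊗[F] V) ⊗[F] V :=
  x ⊗ₜ[F] y - (TensorProduct.assoc F V V V).symm (y ⊗ₜ[F] x)

/-- `[y, x] = y ⊗ x − x ⊗ y ∈ T³V` for `y ∈ V`, `x ∈ T²V`. -/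
noncomputable def br12 (y : V) (x : V ⊗[F] V) : (V ⊗[F] V) ⊗[F] V :=
  (TensorProduct.assoc F V V V).symm (y ⊗ₜ[F] x) - x ⊗ₜ[F] y

/-- The canonical isomorphism `V ⊗ T³V ≃ T⁴V` built from associators. -/
noncomputable def e13 : (V ⊗[F] ((V ⊗[F] V) ⊗[F] V)) ≃ₗ[F] ((V ⊗[F] V) ⊗[F] V) ⊗[F] V :=
  (TensorProduct.assoc F V (V ⊗[F] V) V).symm ≪≫ₗ
    TensorProduct.congr (TensorProduct.assoc F V V V).symm (LinearEquiv.refl F V)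

/-- The canonical isomorphism `T²V ⊗ T²V ≃ T⁴V` built from the associator. -/
noncomputable def e22 : ((V ⊗[F] V) ⊗[F] (V ⊗[F] V)) ≃ₗ[F] ((V ⊗[F] V) ⊗[F] V) ⊗[F] V :=
  (TensorProduct.assoc F (V ⊗[F] V) V V).symm

/-- `[y, z] ∈ T⁴V` for `y ∈ V`, `z ∈ T³V`. -/
noncomputable def br13 (y : V) (z : (V ⊗[F] V) ⊗[F] V) : ((V ⊗[F] V) ⊗[F] V) ⊗[F] V :=
  e13 F (y ⊗ₜ[F] z) - z ⊗ₜ[F] y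

/-- `[z, y] ∈ T⁴V` for `z ∈ T³V`, `y ∈ V`. -/
noncomputable def br31 (z : (V ⊗[F] V) ⊗[F] V) (y : V) : ((V ⊗[F] V) ⊗[F] V) ⊗[F] V :=
  z ⊗ₜ[F] y - e13 F (y ⊗ₜ[F] z)

/-- `[x, x'] ∈ T⁴V` for `x, x' ∈ T²V`. -/
noncomputable def br22 (x x' : V ⊗[F] V) : ((V ⊗[F] V) ⊗[F] V) ⊗[F] V :=
  e22 F (x ⊗ₜ[F] x') - e22 F (x' ⊗ₜ[F] x)

/-- The multiplication of Lie 3-tuples, on `Γ₃ = V × T²V × T³V`. -/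
noncomputable def gamma3Mul (a b : V × (V ⊗[F] V) × ((V ⊗[F] V) ⊗[F] V)) :
    V × (V ⊗[F] V) × ((V ⊗[F] V) ⊗[F] V) :=
  (a.1 + b.1,
   a.2.1 + b.2.1 + br11 F a.1 b.1,
   a.2.2 + b.2.2 + 3 • br12 F a.1 b.2.1 + 3 • br21 F a.2.1 b.1
     + br21 F (br11 F a.1 b.1) (b.1 - a.1))

/-- The multiplication of Lie 4-tuples, on `Γ₄ = V × T²V × T³V × T⁴V`. -/
noncomputable def gamma4Mul
    (a b : V × (V ⊗[F] V) × ((V ⊗[F] V) ⊗[F] V) × (((V ⊗[F] V) ⊗[F] V) ⊗[F] V)) :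
    V × (V ⊗[F] V) × ((V ⊗[F] V) ⊗[F] V) × (((V ⊗[F] V) ⊗[F] V) ⊗[F] V) :=
  (a.1 + b.1,
   a.2.1 + b.2.1 + br11 F a.1 b.1,
   a.2.2.1 + b.2.2.1 + 3 • br12 F a.1 b.2.1 + 3 • br21 F a.2.1 b.1
     + br21 F (br11 F a.1 b.1) (b.1 - a.1),
   a.2.2.2 + b.2.2.2 + br13 F a.1 b.2.2.1 + 3 • br22 F a.2.1 b.2.1
     + br31 F a.2.2.1 b.1
     + br31 F (br21 F a.2.1 b.1) (b.1 - a.1)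
     + br31 F (br12 F a.1 b.2.1) (b.1 - a.1)
     + br22 F (br11 F a.1 b.1) (b.2.1 - a.2.1)
     - br31 F (br21 F (br11 F a.1 b.1) a.1) b.1)

end LieTuples


/-- The inverse `(−v₁, −v₂, −v₃)` in `Γ₃`. -/
noncomputable def gamma3Inv (F : Type*) {V : Type*} [Field F] [AddCommGroup V]
    [Module F V] (a : V × (V ⊗[F] V) × ((V ⊗[F] V) ⊗[F] V)) : V × (V ⊗[F] V) × ((V ⊗[F] V) ⊗[F] V) :=
  (-a.1, -a.2.1, -a.2.2)

/-- The group commutator `[g, g'] = g⁻¹ g'⁻¹ g g'` in `Γ₃`. -/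
noncomputable def gamma3Comm (F : Type*) {V : Type*} [Field F] [AddCommGroup V]
    [Module F V] (g g' : V × (V ⊗[F] V) × ((V ⊗[F] V) ⊗[F] V)) : V × (V ⊗[F] V) × ((V ⊗[F] V) ⊗[F] V) :=
  gamma3Mul F (gamma3Mul F (gamma3Mul F (gamma3Inv F g) (gamma3Inv F g')) g) g'

/-!
The commutator of any two elements of `Γ₃` is `(0, 2[v₁, v₁'], _)`, and the commutator of an element
`(0, x, z)` with `(v₁'', v₂'', v₃'')` is `(0, 0, 6[x, v₁''])`: the terms `3[v₁'', v₂'']` and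
`3[v₂'', v₁'']` cancel, while `x` enters twice through `3[x, v₁'']`. Hence the double commutator is
`(0, 0, 6 · 2 [v₁, v₁', v₁''])`.
-/

section Gamma3Commutator

variable {F V : Type*} [Field F] [AddCommGroup V] [Module F V]

theorem br11_self (u : V) : br11 F u u = 0 :=
  sub_self _

theorem br11_zero_left (u : V) : br11 F 0 u = 0 := by
  simp only [br11, zero_tmul, tmul_zero, sub_self]

theorem br11_zero_right (u : V) : br11 F u 0 = 0 := by
  simp only [br11, zero_tmul, tmul_zero, sub_self]

theorem br11_neg_left (u w : V) : br11 F (-u) w = -br11 F u w := by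
  simp only [br11, neg_tmul, tmul_neg]
  abel

theorem br12_eq_neg_br21 (y : V) (x : V ⊗[F] V) : br12 F y x = -br21 F x y :=
  (neg_sub _ _).symm

theorem br21_zero_left (y : V) : br21 F 0 y = 0 := by
  simp only [br21, zero_tmul, tmul_zero, map_zero, sub_self]

theorem br21_zero_right (x : V ⊗[F] V) : br21 F x 0 = 0 := by
  simp only [br21, zero_tmul, tmul_zero, map_zero, sub_self]

theorem br21_add_left (x x' : V ⊗[F] V) (y : V) : br21 F (x + x') y = br21 F x y + br21 F x' y := by
  simp only [br21, add_tmul, tmul_add, map_add]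
  abel

theorem br21_neg_left (x : V ⊗[F] V) (y : V) : br21 F (-x) y = -br21 F x y := by
  simp only [br21, neg_tmul, tmul_neg, map_neg]
  abel

theorem br21_neg_right (x : V ⊗[F] V) (y : V) : br21 F x (-y) = -br21 F x y := by
  simp only [br21, neg_tmul, tmul_neg, map_neg]
  abel

theorem br21_nsmul_left (n : ℕ) (x : V ⊗[F] V) (y : V) :
    br21 F (n • x) y = n • br21 F x y := by
  induction n with
  | zero => simp only [zero_smul, br21_zero_left]
  | succ n ih => rw [succ_nsmul, succ_nsmul, br21_add_left, ih]

theorem gamma3Comm_fst (g g' : V × (V ⊗[F] V) × ((V ⊗[F] V) ⊗[F] V)) :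
    (gamma3Comm F g g').1 = 0 := by
  simp only [gamma3Comm, gamma3Mul, gamma3Inv]
  abel

theorem gamma3Comm_snd (g g' : V × (V ⊗[F] V) × ((V ⊗[F] V) ⊗[F] V)) :
    (gamma3Comm F g g').2.1 = 2 • br11 F g.1 g'.1 := by
  simp only [gamma3Comm, gamma3Mul, gamma3Inv, br11, tmul_add, add_tmul, neg_tmul, tmul_neg]
  abel

theorem gamma3Comm_of_fst_eq_zero (h g : V × (V ⊗[F] V) × ((V ⊗[F] V) ⊗[F] V)) (hh : h.1 = 0) :
    gamma3Comm F h g = (0, 0, 6 • br21 F h.2.1 g.1) := by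
  obtain ⟨_, x, z⟩ := h
  obtain ⟨c₁, c₂, c₃⟩ := g
  subst hh
  simp only [gamma3Comm, gamma3Mul, gamma3Inv, br12_eq_neg_br21, br21_neg_left, br21_neg_right,
    br21_add_left, br21_zero_left, br21_zero_right, br11_zero_left, br11_zero_right, br11_neg_left,
    br11_self, neg_neg, neg_zero, zero_add, add_zero, sub_zero, Prod.mk.injEq]
  exact ⟨neg_add_cancel c₁, by abel, by abel⟩

end Gamma3Commutator

theorem gamma3_commutator (F V : Type*) [Field F] [AddCommGroup V] [Module F V]
    (g g' g'' : V × (V ⊗[F] V) × ((V ⊗[F] V) ⊗[F] V)) :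
    gamma3Comm F (gamma3Comm F g g') g'' =
      ((0, 0, 12 • br21 F (br11 F g.1 g'.1) g''.1) : V × (V ⊗[F] V) × ((V ⊗[F] V) ⊗[F] V)) := by
  rw [gamma3Comm_of_fst_eq_zero _ _ (gamma3Comm_fst g g'), gamma3Comm_snd, br21_nsmul_left,
    smul_smul]
  rfl
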